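/- Let d ≥ 1 and suppose a₁, a₂, b₁, b₂ ∈ s'(ℤ^d) satisfy b₁(n)a₁(n) + b₂(n)a₂(n) = 1 for all n ∈ ℤ^d. Then there exists h ∈ s'(ℤ^d) such that a₁ + h·a₂ is invertible in s'(ℤ^d). (Consequently the Bass stable rank of s'(ℤ^d) equals 1.) -/

import Mathlib

/-- The 1-norm of a lattice point `n ∈ ℤ^d`. -/
def norm1 {d : ℕ} (n : Fin d → ℤ) : ℝ := ∑ i, |(n i : ℝ)|

/-- `a : ℤ^d → ℂ` has at most polynomial growth, i.e. belongs to `s'(ℤ^d)`. -/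
def PolyGrowth {d : ℕ} (a : (Fin d → ℤ) → ℂ) : Prop :=
  ∃ M : ℝ, 0 < M ∧ ∃ k : ℕ, ∀ n : Fin d → ℤ, ‖a n‖ ≤ M * (1 + norm1 n) ^ k

/-- `a` is invertible in `s'(ℤ^d)`. -/
def IsInvertibleSprime {d : ℕ} (a : (Fin d → ℤ) → ℂ) : Prop :=
  PolyGrowth a ∧ ∃ b : (Fin d → ℤ) → ℂ, PolyGrowth b ∧ ∀ n, a n * b n = 1

/-!
Choose `h` pointwise so that `a₁ n + h n * a₂ n` is whichever of `a₁ n`, `a₂ n` has the larger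
modulus; this needs only `|h n| ≤ 2`. The Bézout identity gives
`1 ≤ (|b₁ n| + |b₂ n|) · max (|a₁ n|, |a₂ n|)`, so the reciprocal of the new function is bounded
by `|b₁| + |b₂|` and has polynomial growth as well.
-/

section NormedField

variable {𝕜 : Type*} [NormedField 𝕜]

noncomputable def switchCoeff (x y : 𝕜) : 𝕜 :=
  if ‖y‖ ≤ ‖x‖ then 0 else (y - x) / y

lemma norm_switchCoeff_le (x y : 𝕜) : ‖switchCoeff x y‖ ≤ 2 := by
  unfold switchCoeff
  split_ifs with hyx
  · simp
  · have hy : 0 < ‖y‖ := (norm_nonneg x).trans_lt (not_le.mp hyx)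
    rw [norm_div, div_le_iff₀ hy]
    linarith [norm_sub_le y x, not_le.mp hyx]

lemma norm_add_switchCoeff_mul (x y : 𝕜) :
    ‖x + switchCoeff x y * y‖ = max ‖x‖ ‖y‖ := by
  unfold switchCoeff
  split_ifs with hyx
  · simp [hyx]
  · have hy : y ≠ 0 := norm_pos_iff.mp ((norm_nonneg x).trans_lt (not_le.mp hyx))
    rw [div_mul_cancel₀ _ hy, add_sub_cancel, max_eq_right (not_le.mp hyx).le]

lemma one_le_mul_norm_of_bezout {x y b₁ b₂ z : 𝕜} (hbez : b₁ * x + b₂ * y = 1)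
    (hz : max ‖x‖ ‖y‖ ≤ ‖z‖) : 1 ≤ (‖b₁‖ + ‖b₂‖) * ‖z‖ :=
  calc (1 : ℝ) = ‖b₁ * x + b₂ * y‖ := by rw [hbez, norm_one]
    _ ≤ ‖b₁‖ * ‖x‖ + ‖b₂‖ * ‖y‖ := by
      simpa only [norm_mul] using norm_add_le (b₁ * x) (b₂ * y)
    _ ≤ ‖b₁‖ * ‖z‖ + ‖b₂‖ * ‖z‖ := by
      gcongr
      exacts [(le_max_left _ _).trans hz, (le_max_right _ _).trans hz]
    _ = (‖b₁‖ + ‖b₂‖) * ‖z‖ := (add_mul _ _ _).symm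

lemma ne_zero_of_one_le_mul_norm {z : 𝕜} {C : ℝ} (hz : 1 ≤ C * ‖z‖) : z ≠ 0 := by
  rintro rfl
  norm_num at hz

lemma norm_inv_le_of_one_le_mul_norm {z : 𝕜} {C : ℝ} (hz : 1 ≤ C * ‖z‖) : ‖z⁻¹‖ ≤ C := by
  rw [norm_inv, inv_le_iff_one_le_mul₀ (norm_pos_iff.mpr (ne_zero_of_one_le_mul_norm hz))]
  exact hz

end NormedField

section PolyGrowth

variable {d : ℕ}

lemma one_le_one_add_norm1 (n : Fin d → ℤ) : (1 : ℝ) ≤ 1 + norm1 n :=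
  le_add_of_nonneg_right (Finset.sum_nonneg fun _ _ => abs_nonneg _)

lemma PolyGrowth.of_norm_le_const {a : (Fin d → ℤ) → ℂ} (C : ℝ) (hC : ∀ n, ‖a n‖ ≤ C) :
    PolyGrowth a :=
  ⟨max C 1, by positivity, 0, fun n => by simpa using (hC n).trans (le_max_left C 1)⟩

lemma PolyGrowth.of_norm_le_add {a b c : (Fin d → ℤ) → ℂ} (ha : PolyGrowth a)
    (hb : PolyGrowth b) (hc : ∀ n, ‖c n‖ ≤ ‖a n‖ + ‖b n‖) : PolyGrowth c := by
  obtain ⟨M, hM, k, hak⟩ := ha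
  obtain ⟨N, hN, l, hbl⟩ := hb
  refine ⟨M + N, add_pos hM hN, max k l, fun n => ?_⟩
  have hbase := one_le_one_add_norm1 n
  calc ‖c n‖ ≤ M * (1 + norm1 n) ^ k + N * (1 + norm1 n) ^ l :=
        (hc n).trans (add_le_add (hak n) (hbl n))
    _ ≤ M * (1 + norm1 n) ^ max k l + N * (1 + norm1 n) ^ max k l := by
        gcongr
        exacts [le_max_left k l, le_max_right k l]
    _ = (M + N) * (1 + norm1 n) ^ max k l := (add_mul _ _ _).symm

end PolyGrowth

theorem bass_stable_rank_one_general (d : ℕ)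
    (a₁ a₂ b₁ b₂ : (Fin d → ℤ) → ℂ)
    (ha₁ : PolyGrowth a₁) (ha₂ : PolyGrowth a₂)
    (hb₁ : PolyGrowth b₁) (hb₂ : PolyGrowth b₂)
    (hbez : ∀ n : Fin d → ℤ, b₁ n * a₁ n + b₂ n * a₂ n = 1) :
    ∃ h : (Fin d → ℤ) → ℂ, PolyGrowth h ∧
      IsInvertibleSprime (fun n => a₁ n + h n * a₂ n) := by
  set h := fun n => switchCoeff (a₁ n) (a₂ n)
  have hnorm (n) : ‖a₁ n + h n * a₂ n‖ = max ‖a₁ n‖ ‖a₂ n‖ := norm_add_switchCoeff_mul _ _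
  have hunit (n) : 1 ≤ (‖b₁ n‖ + ‖b₂ n‖) * ‖a₁ n + h n * a₂ n‖ :=
    one_le_mul_norm_of_bezout (hbez n) (hnorm n).ge
  refine ⟨h, .of_norm_le_const 2 fun n => norm_switchCoeff_le _ _, ?_,
    fun n => (a₁ n + h n * a₂ n)⁻¹, ?_,
    fun n => mul_inv_cancel₀ (ne_zero_of_one_le_mul_norm (hunit n))⟩
  · exact .of_norm_le_add ha₁ ha₂ fun n =>
      (hnorm n).trans_le (max_le_add_of_nonneg (norm_nonneg _) (norm_nonneg _))
  · exact .of_norm_le_add hb₁ hb₂ fun n => norm_inv_le_of_one_le_mul_norm (hunit n)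

/-- The Bass stable rank of `s'(ℤ^d)` is one: every unimodular pair is reducible. -/
theorem bass_stable_rank_one (d : ℕ) (hd : 1 ≤ d)
    (a₁ a₂ b₁ b₂ : (Fin d → ℤ) → ℂ)
    (ha₁ : PolyGrowth a₁) (ha₂ : PolyGrowth a₂)
    (hb₁ : PolyGrowth b₁) (hb₂ : PolyGrowth b₂)
    (hbez : ∀ n : Fin d → ℤ, b₁ n * a₁ n + b₂ n * a₂ n = 1) :
    ∃ h : (Fin d → ℤ) → ℂ, PolyGrowth h ∧
      IsInvertibleSprime (fun n => a₁ n + h n * a₂ n) :=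
  bass_stable_rank_one_general d a₁ a₂ b₁ b₂ ha₁ ha₂ hb₁ hb₂ hbez
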